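/- arXiv:1204.6434 — 4 statements merged into one kernel-verified Lean document; each statement's English description precedes it below -/
import Mathlib

section
/- Let n ≥ 1 be an integer, α ∈ (0,1), and a, K, M > 0. Then there exists a constant C > 0, depending only on n, α, a, K, M, with the following property: for every differentiable f : ℝ → ℝ with f(0) = 0 and |f(r)| ≤ K, |f′(r)| ≤ K for all |r| ≤ a; every differentiable h : ℝⁿ → (0,∞) with |∇h(x)| ≤ M·h(x) for all x; and every continuous w : ℝⁿ → ℝ with sup_x |w(x)| ≤ a, one has ‖(f∘w)·w·h‖_{C^α(ℝⁿ)} ≤ C · (sup_x |w(x)|) · ‖w·h‖_{C^α(ℝⁿ)} (the inequality being trivially true if the right-hand side is infinite). -/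
/-!
Write `(f ∘ w) · w · h = φ · g` with `φ = f ∘ w` and `g = w · h`. Since `f(0) = 0` and
`|f'| ≤ K` on `[-a, a]`, we have `|φ| ≤ K |w|` and `|φ x - φ x'| ≤ K |w x - w x'|`.
The increment of `φ` is thus controlled by that of `w = g / h` rather than of `g`; the identity
`g x' (w x - w x') = w x' ((g x - g x') + g x (h x' / h x - 1))` reduces it to the increment of `g`
plus the relative increment of `h`, which is at most `exp (M |x - x'|) - 1 ≲ |x - x'| ^ α` at
short range because `log h` is `M`-Lipschitz. At long range `|x - x'| ^ α ≥ 1` and the sup bound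
suffices.
-/

open scoped ENNReal

noncomputable section

/-- The (possibly infinite) Hölder norm `max{sup |g|, sup_{x≠x'} |g x - g x'|/|x-x'|^α}`
of a function `g : ℝⁿ → ℝ`, valued in `ℝ≥0∞`. -/
def holderNormE (n : ℕ) (α : ℝ) (g : EuclideanSpace ℝ (Fin n) → ℝ) : ℝ≥0∞ :=
  max (⨆ x : EuclideanSpace ℝ (Fin n), ENNReal.ofReal |g x|)
    (⨆ (x : EuclideanSpace ℝ (Fin n)) (x' : EuclideanSpace ℝ (Fin n)) (_ : x ≠ x'),
      ENNReal.ofReal (|g x - g x'| / ‖x - x'‖ ^ α))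

open Real Set

theorem abs_sub_le_of_abs_deriv_le {f : ℝ → ℝ} {a K : ℝ} (hf : Differentiable ℝ f)
    (hf' : ∀ r, |r| ≤ a → |deriv f r| ≤ K) {r r' : ℝ} (hr : |r| ≤ a) (hr' : |r'| ≤ a) :
    |f r - f r'| ≤ K * |r - r'| := by
  have hIcc : ∀ {t : ℝ}, |t| ≤ a → t ∈ Icc (-a) a := fun ht => abs_le.mp ht
  simpa only [Real.norm_eq_abs] using
    (convex_Icc (-a) a).norm_image_sub_le_of_norm_deriv_le (fun t _ => hf t)
      (fun t ht => hf' t (abs_le.mpr ht)) (hIcc hr') (hIcc hr)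

theorem abs_le_mul_abs_of_abs_deriv_le {f : ℝ → ℝ} {a K : ℝ} (hf : Differentiable ℝ f)
    (hf0 : f 0 = 0) (hf' : ∀ r, |r| ≤ a → |deriv f r| ≤ K) {r : ℝ} (hr : |r| ≤ a) :
    |f r| ≤ K * |r| := by
  simpa [hf0] using
    abs_sub_le_of_abs_deriv_le hf hf' hr (r' := 0) (by simpa using (abs_nonneg r).trans hr)

theorem abs_log_sub_log_le {E : Type*} [NormedAddCommGroup E] [NormedSpace ℝ E] {h : E → ℝ}
    {M : ℝ} (hh : Differentiable ℝ h) (hpos : ∀ x, 0 < h x)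
    (hgrad : ∀ x, ‖fderiv ℝ h x‖ ≤ M * h x) (x y : E) :
    |log (h x) - log (h y)| ≤ M * ‖x - y‖ := by
  have hderiv : ∀ z, HasFDerivAt (fun z => log (h z)) ((h z)⁻¹ • fderiv ℝ h z) z := fun z =>
    (hasDerivAt_log (hpos z).ne').comp_hasFDerivAt z (hh z).hasFDerivAt
  have hbound : ∀ z, ‖(h z)⁻¹ • fderiv ℝ h z‖ ≤ M := fun z => by
    rw [norm_smul, norm_inv, Real.norm_of_nonneg (hpos z).le, inv_mul_le_iff₀ (hpos z),
      mul_comm]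
    exact hgrad z
  simpa only [Real.norm_eq_abs] using
    convex_univ.norm_image_sub_le_of_norm_fderiv_le (fun z _ => (hderiv z).differentiableAt)
      (fun z _ => (hderiv z).fderiv ▸ hbound z) (mem_univ y) (mem_univ x)

theorem abs_div_sub_one_le_exp_sub_one {u v t : ℝ} (hu : 0 < u) (hv : 0 < v)
    (hlog : |log u - log v| ≤ t) : |u / v - 1| ≤ exp t - 1 := by
  rw [← exp_log hu, ← exp_log hv, ← exp_sub]
  have hlow := exp_le_exp.mpr (neg_le_of_abs_le hlog)
  have hup := exp_le_exp.mpr (le_of_abs_le hlog)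
  -- the lower bound is `exp (-t) + exp t ≥ 2`
  rw [abs_le]
  constructor <;> linarith [add_one_le_exp t, add_one_le_exp (-t)]

theorem exp_sub_one_le_mul_exp (t : ℝ) : exp t - 1 ≤ t * exp t := by
  have h := mul_le_mul_of_nonneg_right (show 1 - t ≤ exp (-t) by linarith [add_one_le_exp (-t)])
    (exp_pos t).le
  rw [← exp_add, neg_add_cancel, exp_zero] at h
  linarith

theorem exp_mul_sub_one_le_mul_rpow {M d α : ℝ} (hM : 0 ≤ M) (hd : 0 ≤ d) (hd1 : d ≤ 1)
    (hα : α ≤ 1) : exp (M * d) - 1 ≤ M * exp M * d ^ α :=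
  calc exp (M * d) - 1 ≤ M * d * exp (M * d) := exp_sub_one_le_mul_exp _
    _ ≤ M * d * exp M := by gcongr; nlinarith
    _ ≤ M * exp M * d ^ α := by
        rw [mul_right_comm]; gcongr; exact self_le_rpow_of_le_one hd hd1 hα

theorem abs_mul_sub_mul_le {φ φ' u u' p p' K ε : ℝ} (hK : 0 ≤ K) (hp : p ≠ 0)
    (hφ : |φ| ≤ K * |u|) (hΔφ : |φ - φ'| ≤ K * |u - u'|) (hε : |p' / p - 1| ≤ ε) :
    |φ * (u * p) - φ' * (u' * p')| ≤
      K * |u| * |u * p - u' * p'| + K * |u'| * |u * p - u' * p'| +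
        K * |u'| * |u * p| * ε := by
  have hsplit : φ * (u * p) - φ' * (u' * p') =
      φ * (u * p - u' * p') + u' * p' * (φ - φ') := by ring
  have hkey : u' * p' * (u - u') = u' * ((u * p - u' * p') + u * p * (p' / p - 1)) := by
    field_simp; ring
  have hΔw : |u' * p'| * |φ - φ'| ≤ K * (|u'| * (|u * p - u' * p'| + |u * p| * ε)) :=
    calc |u' * p'| * |φ - φ'| ≤ |u' * p'| * (K * |u - u'|) := by gcongr
      _ = K * |u'| * |(u * p - u' * p') + u * p * (p' / p - 1)| := by
          rw [mul_left_comm, ← abs_mul, hkey, abs_mul]; ring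
      _ ≤ K * |u'| * (|u * p - u' * p'| + |u * p| * ε) := by
          gcongr
          exact (abs_add_le _ _).trans (by rw [abs_mul]; gcongr)
      _ = _ := by ring
  calc |φ * (u * p) - φ' * (u' * p')|
      ≤ |φ| * |u * p - u' * p'| + |u' * p'| * |φ - φ'| := by
        rw [hsplit, ← abs_mul, ← abs_mul]; exact abs_add_le _ _
    _ ≤ K * |u| * |u * p - u' * p'| + K * (|u'| * (|u * p - u' * p'| + |u * p| * ε)) := by
        gcongr
    _ = _ := by ring

section HolderBounds

variable {E : Type*} {φ w h : E → ℝ} {α K M s ν : ℝ}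

theorem abs_mul_mul_le (hφ : ∀ x, |φ x| ≤ K * |w x|) (hK : 0 ≤ K) (hs : ∀ x, |w x| ≤ s)
    (hν : ∀ x, |w x * h x| ≤ ν) (x : E) : |φ x * (w x * h x)| ≤ K * s * ν := by
  rw [abs_mul]
  exact mul_le_mul ((hφ x).trans (by gcongr; exact hs x)) (hν x) (abs_nonneg _)
    (mul_nonneg hK ((abs_nonneg _).trans (hs x)))

theorem abs_mul_mul_sub_le [NormedAddCommGroup E] (hα : α ∈ Ioo 0 1) (hK : 0 ≤ K) (hM : 0 ≤ M)
    (hφ : ∀ x, |φ x| ≤ K * |w x|) (hΔφ : ∀ x x', |φ x - φ x'| ≤ K * |w x - w x'|)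
    (hpos : ∀ x, 0 < h x) (hratio : ∀ x x', |h x' / h x - 1| ≤ exp (M * ‖x - x'‖) - 1)
    (hs : ∀ x, |w x| ≤ s) (hν : ∀ x, |w x * h x| ≤ ν)
    (hνα : ∀ x x', x ≠ x' → |w x * h x - w x' * h x'| ≤ ν * ‖x - x'‖ ^ α)
    {x x' : E} (hne : x ≠ x') :
    |φ x * (w x * h x) - φ x' * (w x' * h x')| ≤
      K * (2 + M * exp M) * s * ν * ‖x - x'‖ ^ α := by
  have hs0 : 0 ≤ s := (abs_nonneg _).trans (hs x)
  have hν0 : 0 ≤ ν := (abs_nonneg _).trans (hν x)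
  rcases le_or_gt ‖x - x'‖ 1 with hd1 | hd1
  · have hexp := exp_mul_sub_one_le_mul_rpow hM (norm_nonneg (x - x')) hd1 hα.2.le
    have hexp0 : 0 ≤ exp (M * ‖x - x'‖) - 1 := by
      linarith [one_le_exp (mul_nonneg hM (norm_nonneg (x - x')))]
    calc |φ x * (w x * h x) - φ x' * (w x' * h x')|
        ≤ K * |w x| * |w x * h x - w x' * h x'| + K * |w x'| * |w x * h x - w x' * h x'| +
            K * |w x'| * |w x * h x| * (exp (M * ‖x - x'‖) - 1) :=
          abs_mul_sub_mul_le hK (hpos x).ne' (hφ x) (hΔφ x x') (hratio x x')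
      _ ≤ K * s * (ν * ‖x - x'‖ ^ α) + K * s * (ν * ‖x - x'‖ ^ α) +
            K * s * ν * (M * exp M * ‖x - x'‖ ^ α) := by
          gcongr <;> first | exact hs _ | exact hν _ | exact hνα x x' hne
      _ = K * (2 + M * exp M) * s * ν * ‖x - x'‖ ^ α := by ring
  · have hdα : 1 ≤ ‖x - x'‖ ^ α := one_le_rpow hd1.le hα.1.le
    calc |φ x * (w x * h x) - φ x' * (w x' * h x')|
        ≤ |φ x * (w x * h x)| + |φ x' * (w x' * h x')| := abs_sub _ _
      _ ≤ K * s * ν + K * s * ν :=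
          add_le_add (abs_mul_mul_le hφ hK hs hν x) (abs_mul_mul_le hφ hK hs hν x')
      _ ≤ K * (2 + M * exp M) * s * ν * 1 := by
          have : 0 ≤ K * (M * exp M) * s * ν := by positivity
          linarith
      _ ≤ K * (2 + M * exp M) * s * ν * ‖x - x'‖ ^ α := by gcongr

end HolderBounds

section HolderNorm

variable {n : ℕ} {α : ℝ} {g : EuclideanSpace ℝ (Fin n) → ℝ}

theorem ofReal_abs_le_holderNormE (x : EuclideanSpace ℝ (Fin n)) :
    ENNReal.ofReal |g x| ≤ holderNormE n α g :=
  le_max_of_le_left (le_iSup (fun x => ENNReal.ofReal |g x|) x)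

theorem ofReal_holderQuotient_le_holderNormE {x x' : EuclideanSpace ℝ (Fin n)} (hne : x ≠ x') :
    ENNReal.ofReal (|g x - g x'| / ‖x - x'‖ ^ α) ≤ holderNormE n α g :=
  le_max_of_le_right (le_iSup₂_of_le x x' (le_iSup_of_le hne le_rfl))

theorem holderNormE_le_ofReal {B : ℝ} (hB : ∀ x, |g x| ≤ B)
    (hBα : ∀ x x', x ≠ x' → |g x - g x'| ≤ B * ‖x - x'‖ ^ α) :
    holderNormE n α g ≤ ENNReal.ofReal B :=
  max_le (iSup_le fun x => ENNReal.ofReal_le_ofReal (hB x))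
    (iSup₂_le fun x x' => iSup_le fun hne => ENNReal.ofReal_le_ofReal <|
      div_le_of_le_mul₀ (by positivity) ((abs_nonneg _).trans (hB x)) (hBα x x' hne))

theorem abs_le_toReal_holderNormE (hg : holderNormE n α g ≠ ⊤) (x : EuclideanSpace ℝ (Fin n)) :
    |g x| ≤ (holderNormE n α g).toReal :=
  (ENNReal.ofReal_le_iff_le_toReal hg).mp (ofReal_abs_le_holderNormE x)

theorem abs_sub_le_toReal_holderNormE_mul (hg : holderNormE n α g ≠ ⊤)
    {x x' : EuclideanSpace ℝ (Fin n)} (hne : x ≠ x') :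
    |g x - g x'| ≤ (holderNormE n α g).toReal * ‖x - x'‖ ^ α := by
  have hd : 0 < ‖x - x'‖ ^ α := rpow_pos_of_pos (norm_pos_iff.mpr (sub_ne_zero.mpr hne)) α
  rw [← div_le_iff₀ hd]
  exact (ENNReal.ofReal_le_iff_le_toReal hg).mp (ofReal_holderQuotient_le_holderNormE hne)

theorem holderNormE_mul_le {a K M : ℝ} {φ w h : EuclideanSpace ℝ (Fin n) → ℝ}
    (hα : α ∈ Ioo 0 1) (hK : 0 < K) (hM : 0 ≤ M)
    (hφ : ∀ x, |φ x| ≤ K * |w x|) (hΔφ : ∀ x x', |φ x - φ x'| ≤ K * |w x - w x'|)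
    (hpos : ∀ x, 0 < h x) (hratio : ∀ x x', |h x' / h x - 1| ≤ exp (M * ‖x - x'‖) - 1)
    (hwa : ∀ x, |w x| ≤ a) :
    holderNormE n α (fun x => φ x * (w x * h x)) ≤
      ENNReal.ofReal (K * (2 + M * exp M)) * (⨆ x, ENNReal.ofReal |w x|) *
        holderNormE n α (fun x => w x * h x) := by
  set S := ⨆ x, ENNReal.ofReal |w x|
  set N := holderNormE n α (fun x => w x * h x)
  have hC : 0 < K * (2 + M * exp M) := by positivity
  have hSx : ∀ x, ENNReal.ofReal |w x| ≤ S := le_iSup (fun x => ENNReal.ofReal |w x|)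
  rcases eq_or_ne N ⊤ with hN | hN
  · -- an infinite norm of `w · h` forces `w ≠ 0`, so the right-hand side is `⊤`
    have hS : S ≠ 0 := by
      intro hS0
      have hw0 : ∀ x, w x = 0 := fun x => abs_nonpos_iff.mp <|
        ENNReal.ofReal_eq_zero.mp (nonpos_iff_eq_zero.mp (hS0 ▸ hSx x))
      exact ENNReal.zero_ne_top (hN ▸ by simp [N, holderNormE, hw0])
    rw [hN, ENNReal.mul_top (mul_ne_zero (ENNReal.ofReal_pos.mpr hC).ne' hS)]
    exact le_top
  · have hS : S ≠ ⊤ := ne_top_of_le_ne_top ENNReal.ofReal_ne_top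
      (iSup_le fun x => ENNReal.ofReal_le_ofReal (hwa x))
    have hs : ∀ x, |w x| ≤ S.toReal := fun x => (ENNReal.ofReal_le_iff_le_toReal hS).mp (hSx x)
    have hν := abs_le_toReal_holderNormE hN
    have hνα : ∀ x x', x ≠ x' → _ := fun x x' => abs_sub_le_toReal_holderNormE_mul hN
    have hK_le : K ≤ K * (2 + M * exp M) :=
      le_mul_of_one_le_right hK.le (by linarith [mul_nonneg hM (exp_pos M).le])
    calc holderNormE n α (fun x => φ x * (w x * h x))
        ≤ ENNReal.ofReal (K * (2 + M * exp M) * S.toReal * N.toReal) :=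
          holderNormE_le_ofReal
            (fun x => (abs_mul_mul_le hφ hK.le hs hν x).trans (by gcongr))
            (fun x x' => abs_mul_mul_sub_le hα hK.le hM hφ hΔφ hpos hratio hs hν hνα)
      _ = ENNReal.ofReal (K * (2 + M * exp M)) * S * N := by
          rw [ENNReal.ofReal_mul (by positivity), ENNReal.ofReal_mul hC.le,
            ENNReal.ofReal_toReal hS, ENNReal.ofReal_toReal hN]

end HolderNorm

theorem statement7_general
    (n : ℕ) (α : ℝ) (hα : α ∈ Set.Ioo (0 : ℝ) 1)
    (a K M : ℝ) (hK : 0 < K) (hM : 0 < M) :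
    ∃ C : ℝ, 0 < C ∧
      ∀ f : ℝ → ℝ, Differentiable ℝ f → f 0 = 0 →
        (∀ r : ℝ, |r| ≤ a → |f r| ≤ K ∧ |deriv f r| ≤ K) →
      ∀ h : EuclideanSpace ℝ (Fin n) → ℝ, Differentiable ℝ h → (∀ x, 0 < h x) →
        (∀ x, ‖fderiv ℝ h x‖ ≤ M * h x) →
      ∀ w : EuclideanSpace ℝ (Fin n) → ℝ, Continuous w → (∀ x, |w x| ≤ a) →
        holderNormE n α (fun x => f (w x) * w x * h x) ≤
          ENNReal.ofReal C * (⨆ x : EuclideanSpace ℝ (Fin n), ENNReal.ofReal |w x|) *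
            holderNormE n α (fun x => w x * h x) := by
  refine ⟨K * (2 + M * exp M), by positivity,
    fun f hf hf0 hfb h hh hpos hgrad w _ hwa => ?_⟩
  have hf' : ∀ r, |r| ≤ a → |deriv f r| ≤ K := fun r hr => (hfb r hr).2
  simp only [mul_assoc (f _)]
  exact holderNormE_mul_le hα hK hM.le
    (fun x => abs_le_mul_abs_of_abs_deriv_le hf hf0 hf' (hwa x))
    (fun x x' => abs_sub_le_of_abs_deriv_le hf hf' (hwa x) (hwa x'))
    hpos
    (fun x x' => abs_div_sub_one_le_exp_sub_one (hpos x') (hpos x)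
      (norm_sub_rev x x' ▸ abs_log_sub_log_le hh hpos hgrad x' x))
    hwa

/-- **Weighted product estimate** (Lemma weighted-algebra):
`‖(f∘w)·w·h‖_{C^α} ≤ C · sup|w| · ‖w·h‖_{C^α}`, with `C` depending only on
`n, α, a, K, M` (trivially true when the right-hand side is infinite). -/
theorem statement7
    (n : ℕ) (hn : 1 ≤ n) (α : ℝ) (hα : α ∈ Set.Ioo (0 : ℝ) 1)
    (a K M : ℝ) (ha : 0 < a) (hK : 0 < K) (hM : 0 < M) :
    ∃ C : ℝ, 0 < C ∧
      ∀ f : ℝ → ℝ, Differentiable ℝ f → f 0 = 0 →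
        (∀ r : ℝ, |r| ≤ a → |f r| ≤ K ∧ |deriv f r| ≤ K) →
      ∀ h : EuclideanSpace ℝ (Fin n) → ℝ, Differentiable ℝ h → (∀ x, 0 < h x) →
        (∀ x, ‖fderiv ℝ h x‖ ≤ M * h x) →
      ∀ w : EuclideanSpace ℝ (Fin n) → ℝ, Continuous w → (∀ x, |w x| ≤ a) →
        holderNormE n α (fun x => f (w x) * w x * h x) ≤
          ENNReal.ofReal C * (⨆ x : EuclideanSpace ℝ (Fin n), ENNReal.ofReal |w x|) *
            holderNormE n α (fun x => w x * h x) :=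
  statement7_general n α hα a K M hK hM
end
end

section
/- Let n ≥ 1 and 0 < t₀ < t₁. Then ∫_{ℝⁿ} |Γ(t₁,y) − Γ(t₀,y)| dy = (2/Γ(n/2)) · ( G(a·t₁) − G(a·t₀) ), where a := (n/2)·(ln t₁ − ln t₀)/(t₁ − t₀), G(u) := ∫₀^u e^{−s} s^{n/2 − 1} ds is the lower incomplete gamma function with parameter n/2, and Γ(n/2) is the Gamma function. -/
open MeasureTheory
open scoped BigOperators ENNReal Topology

noncomputable section

/-- The heat kernel `Γ(t,x) = (4πt)^{-n/2} exp(-|x|²/(4t))` on `ℝⁿ`. -/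
def heatKernel (n : ℕ) (t : ℝ) (x : EuclideanSpace ℝ (Fin n)) : ℝ :=
  (4 * Real.pi * t) ^ (-(n : ℝ) / 2) * Real.exp (-‖x‖ ^ 2 / (4 * t))

/-!
Both kernels have unit mass, so
`∫ |Γ(t₁,·) - Γ(t₀,·)| = 2 ∫_{Γ(t₁,·) ≤ Γ(t₀,·)} (Γ(t₀,·) - Γ(t₁,·))`.
Comparing logarithms, `Γ(t₁,y) ≤ Γ(t₀,y)` exactly on the closed ball of radius `R` with
`R² = 4 t₀ t₁ a`. In polar coordinates, followed by `s = |y|² / (4t)`, the mass of `Γ(t,·)` in the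
ball of radius `R` is `γ(n/2, R²/(4t)) / Γ(n/2)`, and `R²/(4t₀) = a t₁`, `R²/(4t₁) = a t₀`.
-/

open Metric Set Real Module

def lowerGamma (a x : ℝ) : ℝ := ∫ s in Ioc 0 x, exp (-s) * s ^ (a - 1)

lemma integral_abs_sub_eq_two_mul_setIntegral {α : Type*} [MeasurableSpace α] {μ : Measure α}
    {f g : α → ℝ} (hf : Integrable f μ) (hg : Integrable g μ)
    (hfg : ∫ x, f x ∂μ = ∫ x, g x ∂μ) {s : Set α} (hs : MeasurableSet s)
    (hfs : ∀ x, f x ≤ g x ↔ x ∈ s) :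
    ∫ x, |f x - g x| ∂μ = 2 * ∫ x in s, (g x - f x) ∂μ := by
  have habs : ∀ x, |f x - g x| = (f x - g x) + s.indicator (fun x ↦ 2 * (g x - f x)) x := by
    intro x
    by_cases hx : x ∈ s
    · rw [indicator_of_mem hx, abs_of_nonpos (by linarith [(hfs x).2 hx])]
      ring
    · rw [indicator_of_notMem hx, abs_of_nonneg (by linarith [mt (hfs x).1 hx])]
      ring
  have hind : Integrable (s.indicator fun x ↦ 2 * (g x - f x)) μ :=
    ((hg.sub hf).const_mul 2).indicator hs
  rw [integral_congr_ae (ae_of_all _ habs),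
    integral_add (f := fun x ↦ f x - g x) (hf.sub hg) hind, integral_sub hf hg, hfg, sub_self,
    zero_add, integral_indicator hs, integral_const_mul]

lemma integral_Ioc_rpow_mul_exp_neg_div {a b x : ℝ} (hb : 0 < b) (hx : 0 ≤ x) :
    ∫ s in Ioc 0 x, s ^ (a - 1) * exp (-s / b) = b ^ a * lowerGamma a (x / b) := by
  rw [lowerGamma, ← intervalIntegral.integral_of_le hx,
    ← intervalIntegral.integral_of_le (div_nonneg hx hb.le)]
  have hscale : ∀ s ∈ uIcc 0 x,
      s ^ (a - 1) * exp (-s / b) = b ^ (a - 1) * (exp (-(s / b)) * (s / b) ^ (a - 1)) := by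
    intro s hs
    rw [uIcc_of_le hx] at hs
    rw [div_rpow hs.1 hb.le, neg_div]
    field_simp [(rpow_pos_of_pos hb (a - 1)).ne']
  rw [intervalIntegral.integral_congr hscale, intervalIntegral.integral_const_mul,
    intervalIntegral.integral_comp_div (fun u ↦ exp (-u) * u ^ (a - 1)) hb.ne', zero_div,
    smul_eq_mul, ← mul_assoc, ← rpow_add_one hb.ne', sub_add_cancel]

section Radial

variable {E : Type*} [NormedAddCommGroup E] [InnerProductSpace ℝ E] [FiniteDimensional ℝ E]
  [MeasurableSpace E] [BorelSpace E] [Nontrivial E]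

lemma measureReal_ball_zero_one :
    volume.real (ball (0 : E) 1) =
      π ^ ((finrank ℝ E : ℝ) / 2) / Gamma ((finrank ℝ E : ℝ) / 2 + 1) := by
  rw [measureReal_def, InnerProductSpace.volume_ball, ENNReal.ofReal_one, one_pow, one_mul,
    ENNReal.toReal_ofReal (by positivity), sqrt_eq_rpow, ← rpow_natCast, ← rpow_mul pi_nonneg]
  ring_nf

lemma integral_comp_norm_sq (g : ℝ → ℝ) :
    ∫ x : E, g (‖x‖ ^ 2) = π ^ ((finrank ℝ E : ℝ) / 2) / Gamma ((finrank ℝ E : ℝ) / 2) *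
      ∫ s in Ioi 0, s ^ ((finrank ℝ E : ℝ) / 2 - 1) * g s := by
  set d := finrank ℝ E with hdE
  have hd : 0 < d := finrank_pos
  have hintegrand : ∀ x ∈ Ioi (0 : ℝ), (2 * x ^ ((2 : ℝ) - 1)) •
      ((x ^ (2 : ℝ)) ^ ((d : ℝ) / 2 - 1) * g (x ^ (2 : ℝ))) = 2 * (x ^ (d - 1) • g (x ^ 2)) := by
    intro x hx
    have hexp : (2 : ℝ) - 1 + 2 * ((d : ℝ) / 2 - 1) = (d - 1 : ℕ) := by
      rw [Nat.cast_sub hd]; ring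
    calc (2 * x ^ ((2 : ℝ) - 1)) • ((x ^ (2 : ℝ)) ^ ((d : ℝ) / 2 - 1) * g (x ^ (2 : ℝ)))
        = 2 * (x ^ ((2 : ℝ) - 1 + 2 * ((d : ℝ) / 2 - 1)) * g (x ^ 2)) := by
          rw [rpow_add hx, rpow_mul (le_of_lt hx), rpow_two, smul_eq_mul]
          ring
      _ = 2 * (x ^ (d - 1) • g (x ^ 2)) := by rw [hexp, rpow_natCast, smul_eq_mul]
  rw [integral_fun_norm_addHaar volume (fun r ↦ g (r ^ 2)), measureReal_ball_zero_one,
    ← integral_comp_rpow_Ioi_of_pos (g := fun s ↦ s ^ ((d : ℝ) / 2 - 1) * g s) two_pos,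
    setIntegral_congr_fun measurableSet_Ioi hintegrand, integral_const_mul,
    Gamma_add_one (by positivity), nsmul_eq_mul, smul_eq_mul, ← hdE]
  field_simp

lemma setIntegral_closedBall_comp_norm_sq (g : ℝ → ℝ) {R : ℝ} (hR : 0 ≤ R) :
    ∫ x in closedBall (0 : E) R, g (‖x‖ ^ 2) =
      π ^ ((finrank ℝ E : ℝ) / 2) / Gamma ((finrank ℝ E : ℝ) / 2) *
        ∫ s in Ioc 0 (R ^ 2), s ^ ((finrank ℝ E : ℝ) / 2 - 1) * g s := by
  have hball : ∀ x : E, (closedBall (0 : E) R).indicator (fun x ↦ g (‖x‖ ^ 2)) x =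
      (Iic (R ^ 2)).indicator g (‖x‖ ^ 2) := by
    intro x
    simp only [indicator, mem_closedBall_zero_iff, mem_Iic, sq_le_sq₀ (norm_nonneg x) hR]
  rw [← integral_indicator measurableSet_closedBall, funext hball, integral_comp_norm_sq]
  congr 1
  rw [← Ioi_inter_Iic, ← setIntegral_indicator measurableSet_Iic]
  simp_rw [indicator_mul_right]

end Radial

lemma integral_heatKernel (n : ℕ) {t : ℝ} (ht : 0 < t) :
    ∫ y, heatKernel n t y = 1 := by
  have h4t : 0 < 4 * t := by positivity
  have hk : heatKernel n t = fun y ↦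
      (4 * π * t) ^ (-(n : ℝ) / 2) * exp (-(4 * t)⁻¹ * ‖y‖ ^ 2) := by
    funext y
    rw [heatKernel]
    congr 2
    ring
  rw [hk, integral_const_mul, GaussianFourier.integral_rexp_neg_mul_sq_norm (inv_pos.2 h4t),
    finrank_euclideanSpace_fin, div_inv_eq_mul, show π * (4 * t) = 4 * π * t by ring,
    ← rpow_add (by positivity), neg_div, neg_add_cancel, rpow_zero]

lemma integrable_heatKernel (n : ℕ) {t : ℝ} (ht : 0 < t) : Integrable (heatKernel n t) :=
  .of_integral_ne_zero (by rw [integral_heatKernel n ht]; exact one_ne_zero)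

lemma setIntegral_heatKernel_closedBall {n : ℕ} (hn : 1 ≤ n) {t R : ℝ} (ht : 0 < t)
    (hR : 0 ≤ R) :
    ∫ y in closedBall (0 : EuclideanSpace ℝ (Fin n)) R, heatKernel n t y =
      lowerGamma ((n : ℝ) / 2) (R ^ 2 / (4 * t)) / Gamma ((n : ℝ) / 2) := by
  have : Nonempty (Fin n) := ⟨⟨0, hn⟩⟩
  have h4t : 0 < 4 * t := by positivity
  have hpull : ∀ s : ℝ,
      s ^ ((n : ℝ) / 2 - 1) * ((4 * π * t) ^ (-(n : ℝ) / 2) * exp (-s / (4 * t))) =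
        (4 * π * t) ^ (-(n : ℝ) / 2) * (s ^ ((n : ℝ) / 2 - 1) * exp (-s / (4 * t))) :=
    fun s ↦ mul_left_comm _ _ _
  have hconst :
      (4 * π * t) ^ (-(n : ℝ) / 2) * (π ^ ((n : ℝ) / 2) * (4 * t) ^ ((n : ℝ) / 2)) = 1 := by
    rw [← mul_rpow pi_nonneg h4t.le, show π * (4 * t) = 4 * π * t by ring,
      ← rpow_add (by positivity), neg_div, neg_add_cancel, rpow_zero]
  refine (setIntegral_closedBall_comp_norm_sq (E := EuclideanSpace ℝ (Fin n))
    (fun s ↦ (4 * π * t) ^ (-(n : ℝ) / 2) * exp (-s / (4 * t))) hR).trans ?_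
  rw [finrank_euclideanSpace_fin, funext hpull, integral_const_mul,
    integral_Ioc_rpow_mul_exp_neg_div h4t (sq_nonneg R)]
  linear_combination (lowerGamma ((n : ℝ) / 2) (R ^ 2 / (4 * t)) / Gamma ((n : ℝ) / 2)) * hconst

lemma heatKernel_le_heatKernel_iff {n : ℕ} {t₀ t₁ : ℝ} (h0 : 0 < t₀) (h01 : t₀ < t₁)
    (y : EuclideanSpace ℝ (Fin n)) :
    heatKernel n t₁ y ≤ heatKernel n t₀ y ↔
      ‖y‖ ^ 2 ≤ 4 * t₀ * t₁ * ((n : ℝ) / 2 * (log t₁ - log t₀) / (t₁ - t₀)) := by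
  have h1 : 0 < t₁ := h0.trans h01
  have hexp : ∀ t, 0 < t → heatKernel n t y =
      exp (-(n : ℝ) / 2 * (log (4 * π) + log t) - ‖y‖ ^ 2 / (4 * t)) := by
    intro t ht
    rw [heatKernel, rpow_def_of_pos (by positivity), ← exp_add, log_mul (by positivity) ht.ne']
    congr 1
    ring
  have key : ‖y‖ ^ 2 * (t₁ - t₀) = 4 * t₀ * t₁ * (‖y‖ ^ 2 / (4 * t₀) - ‖y‖ ^ 2 / (4 * t₁)) := by
    field_simp
  rw [hexp t₁ h1, hexp t₀ h0, exp_le_exp, mul_div_assoc', le_div_iff₀ (sub_pos.2 h01),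
    key, mul_le_mul_iff_of_pos_left (by positivity)]
  constructor <;> intro h <;> linarith

/-- **Exact `L¹` distance of two heat kernels at different times**:
`∫ |Γ(t₁,y) - Γ(t₀,y)| dy = (2/Γ(n/2)) (G(a t₁) - G(a t₀))` with
`a = (n/2)(ln t₁ - ln t₀)/(t₁ - t₀)` and `G` the lower incomplete gamma function
with parameter `n/2`. -/
theorem statement10 (n : ℕ) (hn : 1 ≤ n) (t₀ t₁ : ℝ) (h0 : 0 < t₀) (h01 : t₀ < t₁) :
    ∫ y : EuclideanSpace ℝ (Fin n), |heatKernel n t₁ y - heatKernel n t₀ y| =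
      (2 / Real.Gamma ((n : ℝ) / 2)) *
        ((∫ s in Set.Ioc (0 : ℝ)
              (((n : ℝ) / 2) * (Real.log t₁ - Real.log t₀) / (t₁ - t₀) * t₁),
            Real.exp (-s) * s ^ ((n : ℝ) / 2 - 1)) -
         (∫ s in Set.Ioc (0 : ℝ)
              (((n : ℝ) / 2) * (Real.log t₁ - Real.log t₀) / (t₁ - t₀) * t₀),
            Real.exp (-s) * s ^ ((n : ℝ) / 2 - 1))) := by
  have h1 : 0 < t₁ := h0.trans h01
  set a := (n : ℝ) / 2 * (log t₁ - log t₀) / (t₁ - t₀)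
  have ha : 0 < a :=
    div_pos (mul_pos (by positivity) (sub_pos.2 (log_lt_log h0 h01))) (sub_pos.2 h01)
  set R := √(4 * t₀ * t₁ * a)
  have hR : R ^ 2 = 4 * t₀ * t₁ * a := sq_sqrt (by positivity)
  have hcross : ∀ y, heatKernel n t₁ y ≤ heatKernel n t₀ y ↔ y ∈ closedBall 0 R := fun y ↦ by
    rw [heatKernel_le_heatKernel_iff h0 h01, mem_closedBall_zero_iff,
      le_sqrt (norm_nonneg y) (by positivity)]
  have hi0 := integrable_heatKernel n h0
  have hi1 := integrable_heatKernel n h1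
  rw [integral_abs_sub_eq_two_mul_setIntegral hi1 hi0
      (by rw [integral_heatKernel n h1, integral_heatKernel n h0]) measurableSet_closedBall hcross,
    integral_sub hi0.integrableOn hi1.integrableOn,
    setIntegral_heatKernel_closedBall hn h0 (sqrt_nonneg _),
    setIntegral_heatKernel_closedBall hn h1 (sqrt_nonneg _), hR,
    show 4 * t₀ * t₁ * a / (4 * t₀) = a * t₁ by field_simp,
    show 4 * t₀ * t₁ * a / (4 * t₁) = a * t₀ by field_simp, lowerGamma, lowerGamma]
  ring
end
end

section
/- Let n ≥ 1. There exists a constant C depending only on n such that for all 0 < t < t′, ∫₀^t ∫_{ℝⁿ} |Γ(t′−τ, y) − Γ(t−τ, y)| dy dτ ≤ C · (t′−t) · (1 + log(1 + t/(t′−t))). -/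
/-!
For `b > 0` both `Γ(b + δ, ·)` and `Γ(b, ·)` are probability densities, so
`∫ |Γ(b + δ) - Γ(b)| ≤ 2`; and `Γ(b) ≤ (1 + δ/b)^{n/2} Γ(b + δ)` pointwise, which gives the
bound `2((1 + δ/b)^{n/2} - 1) ≤ 2nδ/b` once `b ≥ (n + 1)δ`. In either case the inner integral
is at most `4(n + 1)δ / (b + (n + 1)δ)`, and integrating over `b = t - τ ∈ (0, t)` gives
`4(n + 1)δ log(1 + t/((n + 1)δ))`, where `δ = t' - t`.
-/

open MeasureTheory
open scoped BigOperators ENNReal Topology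

noncomputable section

open Real Set

section

variable {α : Type*} [MeasurableSpace α] {μ : Measure α} {f g : α → ℝ}

theorem integral_abs_sub_le_integral_add (hf : Integrable f μ) (hg : Integrable g μ)
    (hf0 : ∀ x, 0 ≤ f x) (hg0 : ∀ x, 0 ≤ g x) :
    ∫ x, |f x - g x| ∂μ ≤ ∫ x, f x ∂μ + ∫ x, g x ∂μ := by
  rw [← integral_add hf hg]
  refine integral_mono (hf.sub hg).abs (hf.add hg) fun x => ?_
  exact abs_sub_le_iff.2 ⟨by linarith [hg0 x], by linarith [hf0 x]⟩

theorem integral_abs_sub_le_of_le_mul {c : ℝ} (hf : Integrable f μ) (hg : Integrable g μ)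
    (hf0 : ∀ x, 0 ≤ f x) (hc : 1 ≤ c) (hgf : ∀ x, g x ≤ c * f x) :
    ∫ x, |f x - g x| ∂μ ≤ (2 * c - 1) * ∫ x, f x ∂μ - ∫ x, g x ∂μ := by
  rw [← integral_const_mul, ← integral_sub (hf.const_mul _) hg]
  refine integral_mono (hf.sub hg).abs ((hf.const_mul _).sub hg) fun x => ?_
  exact abs_sub_le_iff.2 ⟨by nlinarith [hf0 x], by linarith [hgf x]⟩

end

theorem heatKernel_nonneg (n : ℕ) {s : ℝ} (hs : 0 ≤ s) (x : EuclideanSpace ℝ (Fin n)) :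
    0 ≤ heatKernel n s x := by
  unfold heatKernel; positivity

theorem integral_heatKernel_s11 (n : ℕ) {s : ℝ} (hs : 0 < s) :
    ∫ x, heatKernel n s x = 1 := by
  have hexp (x : EuclideanSpace ℝ (Fin n)) : -‖x‖ ^ 2 / (4 * s) = -(4 * s)⁻¹ * ‖x‖ ^ 2 := by
    ring
  simp only [heatKernel, hexp, integral_const_mul, finrank_euclideanSpace_fin,
    GaussianFourier.integral_rexp_neg_mul_sq_norm (inv_pos.2 (by positivity : 0 < 4 * s))]
  rw [show π / (4 * s)⁻¹ = 4 * π * s by field_simp, ← rpow_add (by positivity), neg_div,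
    neg_add_cancel, rpow_zero]

theorem integrable_heatKernel_s11 (n : ℕ) {s : ℝ} (hs : 0 < s) : Integrable (heatKernel n s) :=
  .of_integral_ne_zero (by simp [integral_heatKernel_s11 n hs])

theorem heatKernel_le_rpow_mul_heatKernel (n : ℕ) {u v : ℝ} (hu : 0 < u) (huv : u ≤ v)
    (x : EuclideanSpace ℝ (Fin n)) :
    heatKernel n u x ≤ (v / u) ^ ((n : ℝ) / 2) * heatKernel n v x := by
  have hv : 0 < v := hu.trans_le huv
  have hconst : (v / u) ^ ((n : ℝ) / 2) * (4 * π * v) ^ (-(n : ℝ) / 2) =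
      (4 * π * u) ^ (-(n : ℝ) / 2) := by
    rw [neg_div, rpow_neg (by positivity), rpow_neg (by positivity), ← div_eq_mul_inv,
      ← div_rpow (by positivity) (by positivity), ← inv_rpow (by positivity)]
    congr 1
    field_simp
  rw [heatKernel, heatKernel, ← mul_assoc, hconst]
  refine mul_le_mul_of_nonneg_left (exp_le_exp.2 ?_) (by positivity)
  rw [neg_div, neg_div, neg_le_neg_iff]
  gcongr

theorem rpow_one_add_sub_one_le {p r : ℝ} (hp : 0 ≤ p) (hr : 0 ≤ r) (hpr : p * r ≤ 1) :
    (1 + r) ^ p - 1 ≤ 2 * (p * r) := by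
  have hexp : (1 + r) ^ p ≤ exp (p * r) := by
    rw [mul_comm, exp_mul]
    exact rpow_le_rpow (by positivity) (by linarith [add_one_le_exp r]) hp
  have := abs_exp_sub_one_le (x := p * r) (by rw [abs_of_nonneg (by positivity)]; exact hpr)
  rw [abs_of_nonneg (by positivity : 0 ≤ p * r)] at this
  linarith [le_abs_self (exp (p * r) - 1)]

theorem integral_abs_heatKernel_sub_le_two (n : ℕ) {u v : ℝ} (hu : 0 < u) (hv : 0 < v) :
    ∫ x, |heatKernel n v x - heatKernel n u x| ≤ 2 := by
  have h := integral_abs_sub_le_integral_add (integrable_heatKernel_s11 n hv)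
    (integrable_heatKernel_s11 n hu) (heatKernel_nonneg n hv.le) (heatKernel_nonneg n hu.le)
  rw [integral_heatKernel_s11 n hv, integral_heatKernel_s11 n hu] at h
  linarith

theorem integral_abs_heatKernel_sub_le_rpow (n : ℕ) {u v : ℝ} (hu : 0 < u) (huv : u ≤ v) :
    ∫ x, |heatKernel n v x - heatKernel n u x| ≤ 2 * ((v / u) ^ ((n : ℝ) / 2) - 1) := by
  have hv := hu.trans_le huv
  have h := integral_abs_sub_le_of_le_mul (integrable_heatKernel_s11 n hv)
    (integrable_heatKernel_s11 n hu) (heatKernel_nonneg n hv.le)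
    (one_le_rpow ((one_le_div hu).2 huv) (by positivity))
    (heatKernel_le_rpow_mul_heatKernel n hu huv)
  rw [integral_heatKernel_s11 n hv, integral_heatKernel_s11 n hu] at h
  linarith

theorem integral_abs_heatKernel_add_sub_le (n : ℕ) {b δ : ℝ} (hb : 0 < b) (hδ : 0 < δ) :
    ∫ x, |heatKernel n (b + δ) x - heatKernel n b x| ≤
      4 * (n + 1) * δ / (b + (n + 1) * δ) := by
  rcases le_or_gt b ((n + 1) * δ) with hsmall | hlarge
  · refine (integral_abs_heatKernel_sub_le_two n hb (by linarith)).trans ?_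
    rw [le_div_iff₀ (by positivity)]
    linarith
  · have hpr : (n : ℝ) / 2 * (δ / b) ≤ 1 := by
      rw [div_mul_div_comm, div_le_one (by positivity)]
      linarith
    calc ∫ x, |heatKernel n (b + δ) x - heatKernel n b x|
        ≤ 2 * (((b + δ) / b) ^ ((n : ℝ) / 2) - 1) :=
          integral_abs_heatKernel_sub_le_rpow n hb (by linarith)
      _ = 2 * ((1 + δ / b) ^ ((n : ℝ) / 2) - 1) := by rw [add_div, div_self hb.ne']
      _ ≤ 2 * (2 * ((n : ℝ) / 2 * (δ / b))) := by
          gcongr; exact rpow_one_add_sub_one_le (by positivity) (by positivity) hpr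
      _ = 2 * n * δ / b := by ring
      _ ≤ 4 * (n + 1) * δ / (b + (n + 1) * δ) := by
          rw [div_le_div_iff₀ hb (by positivity)]
          calc 2 * n * δ * (b + (n + 1) * δ) ≤ 2 * n * δ * (2 * b) := by gcongr; linarith
            _ ≤ 4 * (n + 1) * δ * b := by nlinarith [mul_pos hδ hb]

theorem integral_inv_sub_of_lt {a b d : ℝ} (ha : a < d) (hb : b < d) :
    ∫ x in a..b, (d - x)⁻¹ = log ((d - a) / (d - b)) := by
  rw [intervalIntegral.integral_comp_sub_left (fun x => x⁻¹),
    integral_inv_of_pos (sub_pos.2 hb) (sub_pos.2 ha)]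

theorem statement11_general (n : ℕ) :
    ∃ C : ℝ, 0 < C ∧ ∀ t t' : ℝ, 0 < t → t < t' →
      (∫ τ in Set.Ioc (0 : ℝ) t, ∫ y : EuclideanSpace ℝ (Fin n),
          |heatKernel n (t' - τ) y - heatKernel n (t - τ) y|) ≤
        C * (t' - t) * (1 + Real.log (1 + t / (t' - t))) := by
  refine ⟨4 * (n + 1), by positivity, fun t t' ht htt' => ?_⟩
  obtain ⟨δ, hδ, rfl⟩ : ∃ δ > 0, t' = t + δ := ⟨t' - t, sub_pos.2 htt', by ring⟩
  rw [add_sub_cancel_left]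
  set N : ℝ := n + 1
  have hNδ : δ ≤ N * δ := le_mul_of_one_le_left hδ.le (by simp [N])
  have hbound : ∀ᵐ τ ∂volume.restrict (Ioc 0 t),
      ∫ y, |heatKernel n (t + δ - τ) y - heatKernel n (t - τ) y| ≤
        4 * N * δ * (t + N * δ - τ)⁻¹ := by
    rw [ae_restrict_congr_set Ioo_ae_eq_Ioc.symm]
    refine ae_restrict_of_forall_mem measurableSet_Ioo fun τ hτ => ?_
    rw [show t + δ - τ = t - τ + δ by ring]
    exact (integral_abs_heatKernel_add_sub_le n (sub_pos.2 hτ.2) hδ).trans_eq (by ring)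
  have hint : IntegrableOn (fun τ => 4 * N * δ * (t + N * δ - τ)⁻¹) (Ioc 0 t) := by
    refine (ContinuousOn.integrableOn_Icc ?_).mono_set Ioc_subset_Icc_self
    refine continuousOn_const.mul (ContinuousOn.inv₀ (by fun_prop) fun τ hτ => ?_)
    linarith [hτ.2]
  have hlog : log ((t + N * δ) / (N * δ)) ≤ log (1 + t / δ) := by
    rw [add_div, div_self (by positivity), add_comm]
    gcongr
  calc (∫ τ in Ioc 0 t, ∫ y, |heatKernel n (t + δ - τ) y - heatKernel n (t - τ) y|)
      ≤ ∫ τ in Ioc 0 t, 4 * N * δ * (t + N * δ - τ)⁻¹ :=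
        integral_mono_of_nonneg (.of_forall fun τ => integral_nonneg fun y => abs_nonneg _)
          hint hbound
    _ = 4 * N * δ * log ((t + N * δ) / (N * δ)) := by
        rw [← intervalIntegral.integral_of_le ht.le, intervalIntegral.integral_const_mul,
          integral_inv_sub_of_lt (by positivity) (by linarith), sub_zero, add_sub_cancel_left]
    _ ≤ 4 * N * δ * (1 + log (1 + t / δ)) := by
        gcongr
        linarith

/-- **Integrated `L¹` distance of shifted heat kernels** (estimate for
`I = ∫₀^t ∫ |Γ(t'-τ,y) - Γ(t-τ,y)| dy dτ ≤ C (t'-t)(1 + log(1 + t/(t'-t)))`). -/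
theorem statement11 (n : ℕ) (hn : 1 ≤ n) :
    ∃ C : ℝ, 0 < C ∧ ∀ t t' : ℝ, 0 < t → t < t' →
      (∫ τ in Set.Ioc (0 : ℝ) t, ∫ y : EuclideanSpace ℝ (Fin n),
          |heatKernel n (t' - τ) y - heatKernel n (t - τ) y|) ≤
        C * (t' - t) * (1 + Real.log (1 + t / (t' - t))) :=
  statement11_general n
end
end

section
/- Let n ≥ 2 be an integer and p > 2 a real number. If ℓ, k ∈ ℕ satisfy 1 < ℓ + 2k, ℓ + 2k < p/2 + 1, and (ℓ+2k)p + nℓ + 4k(1−ℓ−k) < 4p, then (ℓ,k) is one of the eight pairs (0,1), (0,2), (0,3), (1,1), (1,2), (2,0), (2,1), (3,0). Equivalently: setting λ_{ℓk} := −((ℓ+2k)p + nℓ + 4k(1−ℓ−k)), the only pairs (ℓ,k) with 1 < ℓ+2k < p/2+1 and −4p < λ_{ℓk} are among those eight, corresponding to the eigenvalues λ_{01}, λ_{02}, λ_{03}, λ_{11}, λ_{12}, λ_{20}, λ_{21}, λ_{30}. -/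
/-!
Write `m = ℓ + 2k`. Completing the square turns `-λ_{ℓk} - 4p` into
`(m - 4) p + (n - 2) ℓ + ℓ² - m (m - 2)`, and the constraint `m < p/2 + 1` says `p > 2m - 2`.
For `m ≥ 7` this gives `-λ_{ℓk} - 4p ≥ m² - 8m + 8 + ℓ² > 0`, so only `m ≤ 6` remains,
a finite check.
-/

def negEigenvalue (n p ℓ k : ℝ) : ℝ :=
  (ℓ + 2 * k) * p + n * ℓ + 4 * k * (1 - ℓ - k)

lemma negEigenvalue_eq (n p ℓ k : ℝ) :
    negEigenvalue n p ℓ k =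
      4 * p + (ℓ + 2 * k - 4) * p + (n - 2) * ℓ + ℓ ^ 2 - (ℓ + 2 * k) * (ℓ + 2 * k - 2) := by
  unfold negEigenvalue
  ring

lemma add_two_mul_lt_seven_of_negEigenvalue_lt {n p ℓ k : ℝ} (hn : 2 ≤ n) (hℓ : 0 ≤ ℓ)
    (hdeg : ℓ + 2 * k < p / 2 + 1) (hneg : negEigenvalue n p ℓ k < 4 * p) :
    ℓ + 2 * k < 7 := by
  by_contra! hm
  nlinarith [negEigenvalue_eq n p ℓ k, mul_nonneg (by linarith : (0 : ℝ) ≤ ℓ + 2 * k - 4)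
    (by linarith : (0 : ℝ) ≤ p - 2 * (ℓ + 2 * k) + 2), mul_nonneg (sub_nonneg.2 hn) hℓ,
    mul_nonneg (by linarith : (0 : ℝ) ≤ ℓ + 2 * k - 7) (by linarith : (0 : ℝ) ≤ ℓ + 2 * k - 1)]

theorem statement18_general
    (n : ℕ) (hn : 2 ≤ n) (p : ℝ) (ℓ k : ℕ)
    (h1 : 1 < ℓ + 2 * k)
    (h2 : (ℓ : ℝ) + 2 * (k : ℝ) < p / 2 + 1)
    (h3 : ((ℓ : ℝ) + 2 * (k : ℝ)) * p + (n : ℝ) * (ℓ : ℝ) +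
        4 * (k : ℝ) * (1 - (ℓ : ℝ) - (k : ℝ)) < 4 * p) :
    (ℓ, k) = (0, 1) ∨ (ℓ, k) = (0, 2) ∨ (ℓ, k) = (0, 3) ∨ (ℓ, k) = (1, 1) ∨
    (ℓ, k) = (1, 2) ∨ (ℓ, k) = (2, 0) ∨ (ℓ, k) = (2, 1) ∨ (ℓ, k) = (3, 0) := by
  have hn' : (2 : ℝ) ≤ n := by exact_mod_cast hn
  have hm : ℓ + 2 * k < 7 := by
    exact_mod_cast add_two_mul_lt_seven_of_negEigenvalue_lt hn' ℓ.cast_nonneg h2 h3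
  have hk : k ≤ 3 := by omega
  have hℓ : ℓ ≤ 6 := by omega
  interval_cases k <;> interval_cases ℓ <;> first | decide | omega | (norm_num at h2 h3; linarith)

/-- **At most eight eigenvalues can appear in the expansion** (Remark eight):
if `n ≥ 2`, `p > 2`, `1 < ℓ + 2k < p/2 + 1` and `-λ_{ℓk} = (ℓ+2k)p + nℓ + 4k(1-ℓ-k) < 4p`,
then `(ℓ,k)` is one of `(0,1), (0,2), (0,3), (1,1), (1,2), (2,0), (2,1), (3,0)`. -/
theorem statement18
    (n : ℕ) (hn : 2 ≤ n) (p : ℝ) (hp : 2 < p) (ℓ k : ℕ)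
    (h1 : 1 < ℓ + 2 * k)
    (h2 : (ℓ : ℝ) + 2 * (k : ℝ) < p / 2 + 1)
    (h3 : ((ℓ : ℝ) + 2 * (k : ℝ)) * p + (n : ℝ) * (ℓ : ℝ) +
        4 * (k : ℝ) * (1 - (ℓ : ℝ) - (k : ℝ)) < 4 * p) :
    (ℓ, k) = (0, 1) ∨ (ℓ, k) = (0, 2) ∨ (ℓ, k) = (0, 3) ∨ (ℓ, k) = (1, 1) ∨
    (ℓ, k) = (1, 2) ∨ (ℓ, k) = (2, 0) ∨ (ℓ, k) = (2, 1) ∨ (ℓ, k) = (3, 0) :=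
  statement18_general n hn p ℓ k h1 h2 h3
end
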